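/- Let T be an irreducible 2WCST whose root is a less-than test ⟨< r⟩, and suppose that in the ≥-branch of the root there are test nodes on keys i, j, k, where the test on i is the root of the ≥-branch subtree, the test on j is the root of the ≠/<-branch of the test on i, and the test on k is the root of the ≠/<-branch of the test on j. Let b₁ ≤ b₂ ≤ b₃ be the keys i, j, k sorted in nondecreasing order. Then r < b₂; in particular ⟨< r⟩ and ⟨< b₂⟩ are distinct tests. -/

import Mathlib

/-- Binary search trees with two-way comparisons (2WCST):
leaves are labelled by keys, internal nodes are equal-to tests `eqNode k yes no`
or less-than tests `ltNode k yes no` (yes-branch taken when `q = k`, resp. `q < k`). -/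
inductive CTree where
  | leaf : ℕ → CTree
  | eqNode : ℕ → CTree → CTree → CTree
  | ltNode : ℕ → CTree → CTree → CTree
deriving DecidableEq

namespace CTree

/-- The key labelling the leaf reached by query `q`. -/
def search : CTree → ℕ → ℕ
  | leaf k, _ => k
  | eqNode k y nb, q => if q = k then y.search q else nb.search q
  | ltNode k y nb, q => if q < k then y.search q else nb.search q

/-- The depth of the leaf reached by query `q`. -/
def searchDepth : CTree → ℕ → ℕ
  | leaf _, _ => 0
  | eqNode k y nb, q => (if q = k then y.searchDepth q else nb.searchDepth q) + 1
  | ltNode k y nb, q => (if q < k then y.searchDepth q else nb.searchDepth q) + 1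

/-- All keys appearing in the tree (leaf labels and test keys). -/
def keys : CTree → Finset ℕ
  | leaf k => {k}
  | eqNode k y nb => insert k (y.keys ∪ nb.keys)
  | ltNode k y nb => insert k (y.keys ∪ nb.keys)

/-- `T` is a valid 2WCST for the instance with key set `K = {1, …, n}`:
all keys used belong to `K` and every query `q ∈ K` reaches a leaf labelled `q`. -/
def ValidFor (n : ℕ) (T : CTree) : Prop :=
  T.keys ⊆ Finset.Icc 1 n ∧ ∀ q ∈ Finset.Icc 1 n, T.search q = q

/-- The cost of `T`: `∑_{k ∈ K} w_k · depth_T(k)`. -/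
noncomputable def cost (w : ℕ → ℝ) (n : ℕ) (T : CTree) : ℝ :=
  ∑ k ∈ Finset.Icc 1 n, w k * T.searchDepth k

/-- `T` is an optimal 2WCST for the instance. -/
noncomputable def OptimalFor (w : ℕ → ℝ) (n : ℕ) (T : CTree) : Prop :=
  ValidFor n T ∧ ∀ T' : CTree, ValidFor n T' → cost w n T ≤ cost w n T'

/-- `w(S)`: total weight of the keys labelling the leaves of a subtree. -/
noncomputable def wt (w : ℕ → ℝ) : CTree → ℝ
  | leaf k => w k
  | eqNode _ y nb => wt w y + wt w nb
  | ltNode _ y nb => wt w y + wt w nb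

/-- The side-weight of a node. -/
noncomputable def sw (w : ℕ → ℝ) : CTree → ℝ
  | leaf _ => 0
  | eqNode k _ _ => w k
  | ltNode _ y nb => min (wt w y) (wt w nb)

/-- `Occurs s T`: `s` occurs as a subtree (node) of `T`. -/
inductive Occurs : CTree → CTree → Prop
  | refl (t : CTree) : Occurs t t
  | eqYes {s k y nb} : Occurs s y → Occurs s (eqNode k y nb)
  | eqNo {s k y nb} : Occurs s nb → Occurs s (eqNode k y nb)
  | ltYes {s k y nb} : Occurs s y → Occurs s (ltNode k y nb)
  | ltNo {s k y nb} : Occurs s nb → Occurs s (ltNode k y nb)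

/-- `v` is a child of node `u`. -/
def IsChildOf (v u : CTree) : Prop :=
  match u with
  | leaf _ => False
  | eqNode _ y nb => v = y ∨ v = nb
  | ltNode _ y nb => v = y ∨ v = nb

/-- The root of the tree is an equal-to test. -/
def RootEq : CTree → Prop
  | eqNode _ _ _ => True
  | _ => False

/-- `ReplaceAt s t T T'`: `T'` is obtained from `T` by replacing one
occurrence of the subtree `s` by `t`, leaving the rest of `T` unchanged. -/
inductive ReplaceAt (s t : CTree) : CTree → CTree → Prop
  | here : ReplaceAt s t s t
  | eqYes {k y y' nb} : ReplaceAt s t y y' → ReplaceAt s t (eqNode k y nb) (eqNode k y' nb)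
  | eqNo {k y nb nb'} : ReplaceAt s t nb nb' → ReplaceAt s t (eqNode k y nb) (eqNode k y nb')
  | ltYes {k y y' nb} : ReplaceAt s t y y' → ReplaceAt s t (ltNode k y nb) (ltNode k y' nb)
  | ltNo {k y nb nb'} : ReplaceAt s t nb nb' → ReplaceAt s t (ltNode k y nb) (ltNode k y nb')

/-- Irreducibility relative to the set `Q` of queries that reach the current subtree:
every branch of every node is traversed by some query. -/
def IrredFrom : Finset ℕ → CTree → Prop
  | _, leaf _ => True
  | Q, eqNode k y nb =>
      (Q.filter (· = k)).Nonempty ∧ (Q.filter (· ≠ k)).Nonempty ∧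
      IrredFrom (Q.filter (· = k)) y ∧ IrredFrom (Q.filter (· ≠ k)) nb
  | Q, ltNode k y nb =>
      (Q.filter (· < k)).Nonempty ∧ (Q.filter (fun q => ¬ q < k)).Nonempty ∧
      IrredFrom (Q.filter (· < k)) y ∧ IrredFrom (Q.filter (fun q => ¬ q < k)) nb

/-- `T` is irreducible: no branch is redundant for the query set `{1, …, n}`. -/
def Irred (n : ℕ) (T : CTree) : Prop := IrredFrom (Finset.Icc 1 n) T

/-- The two kinds of comparison tests. -/
inductive TestKind where
  | eq : TestKind
  | lt : TestKind
deriving DecidableEq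

/-- A test node `⟨? k⟩` on key `k` with `=/≥`-branch `hi` and `≠/<`-branch `lo`. -/
def mkTest : TestKind → ℕ → CTree → CTree → CTree
  | .eq, k, hi, lo => eqNode k hi lo
  | .lt, k, hi, lo => ltNode k lo hi

/-- The `=/≥`-outcome of a test of kind `t` on key `b`, applied to query `q`. -/
def hiOutcome : TestKind → ℕ → ℕ → Prop
  | .eq, b, q => q = b
  | .lt, b, q => b ≤ q

instance (t : TestKind) (b q : ℕ) : Decidable (hiOutcome t b q) :=
  match t with
  | .eq => inferInstanceAs (Decidable (q = b))
  | .lt => inferInstanceAs (Decidable (b ≤ q))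

/-- Number of leaves of a tree. -/
def numLeaves : CTree → ℕ
  | leaf _ => 1
  | eqNode _ y nb => y.numLeaves + nb.numLeaves
  | ltNode _ y nb => y.numLeaves + nb.numLeaves

end CTree

/-!
Every query reaching the `≥`-branch of the root is at least `r`. Irreducibility forces each
test `⟨? m⟩` on the spine to be reached by some query `q ≤ m`, and the queries passed on to its
`≠/<`-branch avoid `m`. Hence `i, j, k ≥ r`, and if one of them equals `r` then `r` is no longer
a query further down the spine, so every later key exceeds `r`. At most one of `i, j, k` equals
`r`, so the median exceeds `r`.
-/

namespace CTree

variable {Q : Finset ℕ} {t : TestKind} {m : ℕ} {hi lo : CTree}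

theorem IrredFrom.exists_mem_le_key (h : IrredFrom Q (mkTest t m hi lo)) :
    ∃ q ∈ Q, q ≤ m := by
  cases t <;>
  · obtain ⟨⟨q, hq⟩, -⟩ := h
    rw [Finset.mem_filter] at hq
    exact ⟨q, hq.1, hq.2.le⟩

theorem IrredFrom.exists_lo_subset_notMem_key (h : IrredFrom Q (mkTest t m hi lo)) :
    ∃ Q' ⊆ Q, m ∉ Q' ∧ IrredFrom Q' lo := by
  cases t with
  | eq =>
    obtain ⟨-, -, -, hlo⟩ := h
    exact ⟨_, Finset.filter_subset _ Q, by simp, hlo⟩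
  | lt =>
    obtain ⟨-, -, hlo, -⟩ := h
    exact ⟨_, Finset.filter_subset _ Q, by simp, hlo⟩

end CTree

open CTree in
theorem r_lt_median_general
    (n : ℕ) (r i j k : ℕ) (ti tj tk : TestKind)
    (L T3 T5 T6 T7 : CTree)
    (hirr : Irred n
      (CTree.ltNode r L (mkTest ti i T3 (mkTest tj j T5 (mkTest tk k T6 T7))))) :
    r < max (min i j) (min (max i j) k) := by
  obtain ⟨-, -, -, hirr₁⟩ := hirr
  have hQ₁ : ∀ q ∈ (Finset.Icc 1 n).filter (fun q => ¬ q < r), r ≤ q :=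
    fun q hq => not_lt.mp (Finset.mem_filter.mp hq).2
  obtain ⟨q₁, hq₁, hq₁i⟩ := hirr₁.exists_mem_le_key
  obtain ⟨Q₂, hQ₂, hiQ₂, hirr₂⟩ := hirr₁.exists_lo_subset_notMem_key
  obtain ⟨q₂, hq₂, hq₂j⟩ := hirr₂.exists_mem_le_key
  obtain ⟨Q₃, hQ₃, hjQ₃, hirr₃⟩ := hirr₂.exists_lo_subset_notMem_key
  obtain ⟨q₃, hq₃, hq₃k⟩ := hirr₃.exists_mem_le_key
  have hrq₁ := hQ₁ q₁ hq₁
  have hrq₂ := hQ₁ q₂ (hQ₂ hq₂)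
  have hrq₃ := hQ₁ q₃ (hQ₂ (hQ₃ hq₃))
  have hq₂i : q₂ ≠ i := ne_of_mem_of_not_mem hq₂ hiQ₂
  have hq₃i : q₃ ≠ i := ne_of_mem_of_not_mem (hQ₃ hq₃) hiQ₂
  have hq₃j : q₃ ≠ j := ne_of_mem_of_not_mem hq₃ hjQ₃
  omega

open CTree in
/-- **Claim: `r < b₂`.** If an irreducible 2WCST has root `⟨< r⟩` and its ≥-branch
is `⟨? i⟩(T₃, ⟨? j⟩(T₅, ⟨? k⟩(T₆, T₇)))` (each next test on the `≠/<`-branch of the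
previous one), and `b₁ ≤ b₂ ≤ b₃` is the sorted order of `i, j, k`, then `r < b₂`
(so `⟨< r⟩` and `⟨< b₂⟩` are distinct tests). Here the median `b₂` of `i, j, k` is
`max (min i j) (min (max i j) k)`. -/
theorem r_lt_median
    (n : ℕ) (r i j k : ℕ) (ti tj tk : TestKind)
    (L T3 T5 T6 T7 : CTree)
    (hvalid : ValidFor n
      (CTree.ltNode r L (mkTest ti i T3 (mkTest tj j T5 (mkTest tk k T6 T7)))))
    (hirr : Irred n
      (CTree.ltNode r L (mkTest ti i T3 (mkTest tj j T5 (mkTest tk k T6 T7))))) :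
    r < max (min i j) (min (max i j) k) :=
  r_lt_median_general n r i j k ti tj tk L T3 T5 T6 T7 hirr
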